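/- arXiv:1707.08314 — 3 statements merged into one kernel-verified Lean document; each statement's English description precedes it below -/
import Mathlib

section
/- Let H be a complex inner product space, and let σ, τ ∈ H satisfy ‖σ‖ = ‖τ‖ = 1 and ⟨σ, τ⟩ = 0 with respect to an inner product ⟨·,·⟩₁. Let ⟨·,·⟩₂ be a second inner product on H such that for some ε ∈ (0,1) and μ ∈ ℝ, every s in the span of σ and τ satisfies 2^{μ-ε}‖s‖₂ ≤ ‖s‖₁ ≤ 2^{μ+ε}‖s‖₂. Then |⟨σ/‖σ‖₂, τ/‖τ‖₂⟩₂| ≤ C ε for a constant C depending only on μ (and not on ε, σ, τ). -/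
/-!
Normalize `x = σ / ‖σ‖₂` and `y = τ / ‖τ‖₂`, and put `L = 2^(μ-ε)`, `U = 2^(μ+ε)`.
By Pythagoras `‖x + y‖₁² = ‖x‖₁² + ‖y‖₁² ∈ [2L², 2U²]`, so by comparability
`‖x + y‖₂² = 2 + 2 Re⟪x, y⟫₂ ∈ [2(L/U)², 2(U/L)²]`, whence
`|Re⟪x, y⟫₂| ≤ (U/L)² - 1 = 2^(4ε) - 1 ≤ 15ε` (Bernoulli). Replacing `y` by `i y` bounds
the imaginary part in the same way, so `C = 30` works for every `μ`.
-/

open ComplexConjugate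

theorem sq_two_rpow_add_div_two_rpow_sub_le (μ : ℝ) {ε : ℝ} (h₀ : 0 ≤ ε) (h₁ : ε ≤ 1) :
    ((2 : ℝ) ^ (μ + ε) / 2 ^ (μ - ε)) ^ 2 ≤ 1 + 15 * ε := by
  have h16 : ((2 : ℝ) ^ (μ + ε) / 2 ^ (μ - ε)) ^ 2 = (1 + 15) ^ ε := by
    rw [← Real.rpow_sub two_pos, ← Real.rpow_natCast, ← Real.rpow_mul zero_le_two,
      show (μ + ε - (μ - ε)) * ((2 : ℕ) : ℝ) = 4 * ε by push_cast; ring,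
      Real.rpow_mul zero_le_two]
    norm_num
  rw [h16, mul_comm 15 ε]
  exact rpow_one_add_le_one_add_mul_self (by norm_num) h₀ h₁

theorem abs_le_sub_one_of_inv_le_one_add {D r : ℝ} (hD : 1 ≤ D) (h₁ : D⁻¹ ≤ 1 + r)
    (h₂ : 1 + r ≤ D) : |r| ≤ D - 1 := by
  have hDinv : D * D⁻¹ = 1 := mul_inv_cancel₀ (by positivity)
  refine abs_le.2 ⟨?_, by linarith⟩
  nlinarith [sq_nonneg (D - 1)]

section SesquilinearForm

variable {V : Type*} [AddCommGroup V] {inner₂ : V → V → ℂ}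

theorem inner_smul_right_of_conj_symm [Module ℂ V]
    (hsymm : ∀ x y, inner₂ y x = conj (inner₂ x y))
    (hsmul : ∀ (c : ℂ) (x y : V), inner₂ (c • x) y = conj c * inner₂ x y) (c : ℂ) (x y : V) :
    inner₂ x (c • y) = c * inner₂ x y := by
  rw [hsymm, hsmul, map_mul, Complex.conj_conj, ← hsymm]

theorem re_inner_add_add_self_of_conj_symm (hsymm : ∀ x y, inner₂ y x = conj (inner₂ x y))
    (hadd : ∀ x y z, inner₂ (x + y) z = inner₂ x z + inner₂ y z) (x y : V) :
    (inner₂ (x + y) (x + y)).re = (inner₂ x x).re + 2 * (inner₂ x y).re + (inner₂ y y).re := by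
  have hyx : (inner₂ y x).re = (inner₂ x y).re := by rw [hsymm x y, Complex.conj_re]
  rw [hadd, hsymm (x + y) x, hsymm (x + y) y, hadd, hadd]
  simp only [map_add, Complex.add_re, Complex.conj_re]
  linarith

theorem re_inner_smul_smul_self [Module ℂ V] (hsymm : ∀ x y, inner₂ y x = conj (inner₂ x y))
    (hsmul : ∀ (c : ℂ) (x y : V), inner₂ (c • x) y = conj c * inner₂ x y) (c : ℂ) (x : V) :
    (inner₂ (c • x) (c • x)).re = ‖c‖ ^ 2 * (inner₂ x x).re := by
  rw [hsmul, inner_smul_right_of_conj_symm hsymm hsmul, ← mul_assoc,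
    ← Complex.normSq_eq_conj_mul_self, Complex.re_ofReal_mul, Complex.normSq_eq_norm_sq]

theorem norm₂_smul [Module ℂ V] (hsymm : ∀ x y, inner₂ y x = conj (inner₂ x y))
    (hsmul : ∀ (c : ℂ) (x y : V), inner₂ (c • x) y = conj c * inner₂ x y) {norm₂ : V → ℝ}
    (hnorm₂ : ∀ x, norm₂ x = √(inner₂ x x).re) (c : ℂ) (x : V) :
    norm₂ (c • x) = ‖c‖ * norm₂ x := by
  rw [hnorm₂, hnorm₂, re_inner_smul_smul_self hsymm hsmul, Real.sqrt_mul (sq_nonneg _),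
    Real.sqrt_sq (norm_nonneg _)]

theorem norm₂_inv_smul_self [Module ℂ V] (hsymm : ∀ x y, inner₂ y x = conj (inner₂ x y))
    (hsmul : ∀ (c : ℂ) (x y : V), inner₂ (c • x) y = conj c * inner₂ x y) {norm₂ : V → ℝ}
    (hnorm₂ : ∀ x, norm₂ x = √(inner₂ x x).re) {v : V} (hv : norm₂ v ≠ 0) :
    norm₂ ((norm₂ v)⁻¹ • v) = 1 := by
  have hv₀ : 0 ≤ norm₂ v := hnorm₂ v ▸ Real.sqrt_nonneg _
  rw [← Complex.coe_smul, norm₂_smul hsymm hsmul hnorm₂, Complex.norm_real,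
    Real.norm_of_nonneg (inv_nonneg.2 hv₀), inv_mul_cancel₀ hv]

end SesquilinearForm

theorem abs_re_inner₂_le_of_inner_eq_zero {V : Type*} [NormedAddCommGroup V]
    [InnerProductSpace ℂ V] {inner₂ : V → V → ℂ} (hsymm : ∀ x y, inner₂ y x = conj (inner₂ x y))
    (hadd : ∀ x y z, inner₂ (x + y) z = inner₂ x z + inner₂ y z)
    (hre : ∀ x, 0 ≤ (inner₂ x x).re) {norm₂ : V → ℝ} (hnorm₂ : ∀ x, norm₂ x = √(inner₂ x x).re)
    {W : Submodule ℂ V} {L U : ℝ} (hL : 0 < L)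
    (hcomp : ∀ s ∈ W, L * norm₂ s ≤ ‖s‖ ∧ ‖s‖ ≤ U * norm₂ s) {x y : V} (hxW : x ∈ W)
    (hyW : y ∈ W) (hx : norm₂ x = 1) (hy : norm₂ y = 1) (hxy : inner ℂ x y = 0) :
    |(inner₂ x y).re| ≤ (U / L) ^ 2 - 1 := by
  have hsq : ∀ s ∈ W, L ^ 2 * norm₂ s ^ 2 ≤ ‖s‖ ^ 2 ∧ ‖s‖ ^ 2 ≤ U ^ 2 * norm₂ s ^ 2 := by
    intro s hs
    have hs₀ : 0 ≤ norm₂ s := hnorm₂ s ▸ Real.sqrt_nonneg _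
    obtain ⟨h₁, h₂⟩ := hcomp s hs
    rw [← mul_pow, ← mul_pow]
    exact ⟨pow_le_pow_left₀ (by positivity) h₁ 2, pow_le_pow_left₀ (norm_nonneg _) h₂ 2⟩
  have hpyth : ‖x + y‖ ^ 2 = ‖x‖ ^ 2 + ‖y‖ ^ 2 := by
    simpa only [sq] using norm_add_sq_eq_norm_sq_add_norm_sq_of_inner_eq_zero x y hxy
  have hpol : norm₂ (x + y) ^ 2 = 2 * (1 + (inner₂ x y).re) := by
    have hsq₂ : ∀ v, norm₂ v ^ 2 = (inner₂ v v).re := fun v => by rw [hnorm₂, Real.sq_sqrt (hre v)]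
    have := re_inner_add_add_self_of_conj_symm hsymm hadd x y
    rw [← hsq₂, ← hsq₂, ← hsq₂, hx, hy] at this
    linarith
  obtain ⟨hx₁, hx₂⟩ := hsq x hxW
  obtain ⟨hy₁, hy₂⟩ := hsq y hyW
  obtain ⟨hxy₁, hxy₂⟩ := hsq (x + y) (W.add_mem hxW hyW)
  rw [hx, one_pow, mul_one] at hx₁ hx₂
  rw [hy, one_pow, mul_one] at hy₁ hy₂
  rw [hpol, hpyth] at hxy₁ hxy₂
  have hU : 0 < U ^ 2 := by nlinarith
  rw [div_pow]
  apply abs_le_sub_one_of_inv_le_one_add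
  · rw [one_le_div₀ (by positivity)]
    nlinarith
  · rw [inv_div, div_le_iff₀ hU]
    nlinarith
  · rw [le_div_iff₀ (by positivity)]
    nlinarith

/-- Near-isometric comparability of two Hermitian inner products preserves
near-orthogonality: if `σ, τ` are `⟨·,·⟩₁`-orthonormal and every `s` in their span
satisfies `2^(μ-ε)‖s‖₂ ≤ ‖s‖₁ ≤ 2^(μ+ε)‖s‖₂`, then the `⟨·,·⟩₂`-normalized vectors
have inner product of modulus at most `C·ε`, with `C = C(μ)`. -/
theorem stmt_3 (μ : ℝ) :
    ∃ C : ℝ, 0 < C ∧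
      ∀ (V : Type) [NormedAddCommGroup V] [InnerProductSpace ℂ V]
        (inner2 : V → V → ℂ)
        (_ : ∀ x y, inner2 y x = starRingEnd ℂ (inner2 x y))
        (_ : ∀ x y z, inner2 (x + y) z = inner2 x z + inner2 y z)
        (_ : ∀ (c : ℂ) (x y : V), inner2 (c • x) y = starRingEnd ℂ c * inner2 x y)
        (_ : ∀ x, 0 ≤ (inner2 x x).re)
        (_ : ∀ x, x ≠ 0 → 0 < (inner2 x x).re)
        (norm2 : V → ℝ) (_ : ∀ x, norm2 x = Real.sqrt (inner2 x x).re)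
        (ε : ℝ) (_ : 0 < ε) (_ : ε < 1)
        (σ τ : V) (_ : ‖σ‖ = 1) (_ : ‖τ‖ = 1) (_ : (inner ℂ σ τ : ℂ) = 0)
        (_ : ∀ s ∈ Submodule.span ℂ ({σ, τ} : Set V),
          (2:ℝ) ^ (μ - ε) * norm2 s ≤ ‖s‖ ∧ ‖s‖ ≤ (2:ℝ) ^ (μ + ε) * norm2 s),
        ‖inner2 ((norm2 σ)⁻¹ • σ) ((norm2 τ)⁻¹ • τ)‖ ≤ C * ε := by
  refine ⟨30, by norm_num, ?_⟩
  intro V _ _ inner2 hsymm hadd hsmul hre hpos norm2 hn2 ε hε0 hε1 σ τ hσ hτ horth hcomp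
  have hσW : σ ∈ Submodule.span ℂ ({σ, τ} : Set V) := Submodule.subset_span (by simp)
  have hτW : τ ∈ Submodule.span ℂ ({σ, τ} : Set V) := Submodule.subset_span (by simp)
  have hne : ∀ v : V, ‖v‖ = 1 → norm2 v ≠ 0 := fun v hv => by
    rw [hn2, Real.sqrt_ne_zero']
    exact hpos v (norm_ne_zero_iff.1 (by rw [hv]; exact one_ne_zero))
  set x := (norm2 σ)⁻¹ • σ
  set y := (norm2 τ)⁻¹ • τ
  have hx : norm2 x = 1 := norm₂_inv_smul_self hsymm hsmul hn2 (hne σ hσ)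
  have hy : norm2 y = 1 := norm₂_inv_smul_self hsymm hsmul hn2 (hne τ hτ)
  have hIy : norm2 (Complex.I • y) = 1 := by
    rw [norm₂_smul hsymm hsmul hn2, Complex.norm_I, one_mul, hy]
  have hxW : x ∈ Submodule.span ℂ ({σ, τ} : Set V) := Submodule.smul_of_tower_mem _ _ hσW
  have hyW : y ∈ Submodule.span ℂ ({σ, τ} : Set V) := Submodule.smul_of_tower_mem _ _ hτW
  have hxy : inner ℂ x y = 0 := by simp [x, y, horth]
  have hxIy : inner ℂ x (Complex.I • y) = 0 := by rw [inner_smul_right, hxy, mul_zero]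
  have hRe := abs_re_inner₂_le_of_inner_eq_zero hsymm hadd hre hn2
    (Real.rpow_pos_of_pos two_pos _) hcomp hxW hyW hx hy hxy
  have hIm := abs_re_inner₂_le_of_inner_eq_zero hsymm hadd hre hn2
    (Real.rpow_pos_of_pos two_pos _) hcomp hxW (Submodule.smul_mem _ _ hyW) hx hIy hxIy
  rw [inner_smul_right_of_conj_symm hsymm hsmul] at hIm
  have hratio := sq_two_rpow_add_div_two_rpow_sub_le μ hε0.le hε1.le
  calc ‖inner2 x y‖ ≤ |(inner2 x y).re| + |(inner2 x y).im| := Complex.norm_le_abs_re_add_abs_im _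
    _ ≤ 30 * ε := by
      simp only [Complex.I_mul_re, abs_neg] at hIm
      linarith
end

section
/- The ideal I ⊆ ℂ[z₁,z₂,z₃] generated by f₁ = z₁² − z₁z₂z₃, f₂ = z₂² − z₃³, f₃ = z₃² − z₁³ is not a homogeneous ideal. Equivalently, the polynomials z₁², z₂², z₃² do not all belong to I. -/
/-!
If the ideal were homogeneous it would contain the degree-2 component `z₃²` of its generator
`z₃² - z₁³`. But all three generators vanish at the point `(1, 1, 1)` while `z₃²` does not,
so `z₃²` is not in the ideal.
-/

open MvPolynomial

namespace MvPolynomial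

variable {σ R : Type*}

section GradedAlgebra

attribute [local instance] MvPolynomial.gradedAlgebra

theorem homogeneousComponent_mem_span_of_isHomogeneous [CommSemiring R]
    {S : Set (MvPolynomial σ R)} (hS : ∀ p ∈ S, ∃ d : ℕ, p.IsHomogeneous d)
    {q : MvPolynomial σ R} (hq : q ∈ Ideal.span S) (n : ℕ) :
    homogeneousComponent n q ∈ Ideal.span S :=
  homogeneousComponent_mem_of_mem
    (Ideal.homogeneous_span _ S fun p hp => (hS p hp).imp fun _ hd => hd) hq n

end GradedAlgebra

theorem homogeneousComponent_sub_of_isHomogeneous [CommRing R] {p q : MvPolynomial σ R}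
    {m n : ℕ} (hp : p.IsHomogeneous m) (hq : q.IsHomogeneous n) (hmn : m ≠ n) :
    homogeneousComponent m (p - q) = p := by
  rw [map_sub, homogeneousComponent_eq_self hp, homogeneousComponent_of_mem hq, if_neg hmn,
    sub_zero]

theorem span_le_ker_eval [CommSemiring R] {x : σ → R} {S : Set (MvPolynomial σ R)}
    (hS : ∀ p ∈ S, eval x p = 0) : Ideal.span S ≤ RingHom.ker (eval x) :=
  Ideal.span_le.2 fun p hp => RingHom.mem_ker.2 (hS p hp)

end MvPolynomial

/-- Example 1 of Section 3.4: the ideal of `ℂ[z₁,z₂,z₃]` generated by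
`z₁² - z₁z₂z₃`, `z₂² - z₃³`, `z₃² - z₁³` is not homogeneous; equivalently the
polynomials `z₁², z₂², z₃²` do not all belong to it. -/
theorem stmt_13 (f₁ f₂ f₃ : MvPolynomial (Fin 3) ℂ)
    (h₁ : f₁ = X 0 ^ 2 - X 0 * X 1 * X 2)
    (h₂ : f₂ = X 1 ^ 2 - X 2 ^ 3)
    (h₃ : f₃ = X 2 ^ 2 - X 0 ^ 3)
    (I : Ideal (MvPolynomial (Fin 3) ℂ))
    (hI : I = Ideal.span ({f₁, f₂, f₃} : Set (MvPolynomial (Fin 3) ℂ))) :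
    (¬ ∃ S : Set (MvPolynomial (Fin 3) ℂ),
        (∀ p ∈ S, ∃ d : ℕ, p.IsHomogeneous d) ∧ I = Ideal.span S) ∧
    ¬ (X 0 ^ 2 ∈ I ∧ X 1 ^ 2 ∈ I ∧ X 2 ^ 2 ∈ I) := by
  have hI_le : I ≤ RingHom.ker (eval fun _ => (1 : ℂ)) := by
    rw [hI]
    refine span_le_ker_eval ?_
    rintro p (rfl | rfl | rfl) <;> simp [h₁, h₂, h₃]
  have hX₂ : (X 2 ^ 2 : MvPolynomial (Fin 3) ℂ) ∉ I := fun h => by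
    simpa using RingHom.mem_ker.1 (hI_le h)
  refine ⟨?_, fun h => hX₂ h.2.2⟩
  rintro ⟨S, hS, rfl⟩
  have hf₃ : f₃ ∈ Ideal.span S := hI ▸ Ideal.subset_span (by simp)
  have hcomp := homogeneousComponent_mem_span_of_isHomogeneous hS hf₃ 2
  rw [h₃, homogeneousComponent_sub_of_isHomogeneous (isHomogeneous_X_pow _ 2)
    (isHomogeneous_X_pow _ 3) (by norm_num)] at hcomp
  exact hX₂ hcomp
end

section
/- Let H be a complex Hilbert space and (e_d)_{d∈Γ} an orthogonal family indexed by a set Γ ⊆ ℝ bounded below with Γ ⊆ (1/k!)ℤ. For r ∈ (0,1] define the rescaled inner product ⟨x, y⟩_r = Σ_{d∈Γ} r^{2d+2n} x_d \overline{y_d} for x = Σ x_d e_d, y = Σ y_d e_d (whenever convergent). If s = Σ_{d∈Γ} s_d e_d with ‖s‖_1 < ∞ and s ≠ 0, then lim_{r→0} (log ‖s‖_r²)/(2 log r) − n = min{ d ∈ Γ : s_d ≠ 0 }. -/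
open Set Filter Topology

/-! The lowest degree `dmin` is attained because the degrees lie in the discrete set
`(1/k!)ℤ` and are bounded below. For `0 < r ≤ 1` every weight `r^(2d+2n)` with `s_d ≠ 0` is at
most `r^(2 dmin + 2n)`, so `‖s‖_r²` is squeezed between `|s_dmin|² r^(2 dmin + 2n)` and
`‖s‖_1² r^(2 dmin + 2n)`; after taking logarithms the constants disappear in the limit. -/

theorem exists_isLeast_of_subset_div_int {K : Type*} [Field K] [LinearOrder K]
    [IsStrictOrderedRing K] [FloorRing K] {S : Set K} {c : K} (hc : 0 < c)
    (hS : ∀ d ∈ S, ∃ m : ℤ, d = m / c) (hbdd : BddBelow S) (hne : S.Nonempty) :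
    ∃ d, IsLeast S d := by
  obtain ⟨b, hb⟩ := hbdd
  obtain ⟨d₀, hd₀⟩ := hne
  obtain ⟨m₀, rfl⟩ := hS d₀ hd₀
  obtain ⟨m, hmS, hm⟩ := Int.exists_least_of_bdd (P := fun m : ℤ => (m : K) / c ∈ S)
    ⟨⌈b * c⌉, fun z hz => Int.ceil_le.mpr ((le_div_iff₀ hc).mp (hb hz))⟩ ⟨m₀, hd₀⟩
  refine ⟨m / c, hmS, fun d hd => ?_⟩
  obtain ⟨z, rfl⟩ := hS d hd
  exact div_le_div_of_nonneg_right (by exact_mod_cast hm z hd) hc.le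

section RescaledSum

variable {e₀ r : ℝ}

theorem rpow_mul_le_rpow_mul_of_exponent_ge {x e : ℝ} (hx : 0 ≤ x) (he : x ≠ 0 → e₀ ≤ e)
    (hr₀ : 0 < r) (hr₁ : r ≤ 1) : r ^ e * x ≤ r ^ e₀ * x := by
  rcases eq_or_ne x 0 with rfl | hx₀
  · simp
  · exact mul_le_mul_of_nonneg_right (Real.rpow_le_rpow_of_exponent_ge hr₀ hr₁ (he hx₀)) hx

variable {ι : Type*} {w e : ι → ℝ}

theorem summable_rpow_mul_of_le (hw : 0 ≤ w) (hsum : Summable w)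
    (he : ∀ i, w i ≠ 0 → e₀ ≤ e i) (hr₀ : 0 < r) (hr₁ : r ≤ 1) :
    Summable fun i => r ^ e i * w i :=
  (hsum.mul_left (r ^ e₀)).of_nonneg_of_le (fun i => mul_nonneg (by positivity) (hw i))
    fun i => rpow_mul_le_rpow_mul_of_exponent_ge (hw i) (he i) hr₀ hr₁

theorem tsum_rpow_mul_le (hw : 0 ≤ w) (hsum : Summable w)
    (he : ∀ i, w i ≠ 0 → e₀ ≤ e i) (hr₀ : 0 < r) (hr₁ : r ≤ 1) :
    ∑' i, r ^ e i * w i ≤ r ^ e₀ * ∑' i, w i := by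
  rw [← tsum_mul_left]
  exact (summable_rpow_mul_of_le hw hsum he hr₀ hr₁).tsum_le_tsum
    (fun i => rpow_mul_le_rpow_mul_of_exponent_ge (hw i) (he i) hr₀ hr₁) (hsum.mul_left _)

end RescaledSum

theorem tendsto_log_div_log_of_le_rpow {f : ℝ → ℝ} {p a C : ℝ} (ha : 0 < a)
    (hlow : ∀ᶠ r in 𝓝[>] 0, r ^ p * a ≤ f r) (hup : ∀ᶠ r in 𝓝[>] 0, f r ≤ r ^ p * C) :
    Tendsto (fun r => Real.log (f r) / Real.log r) (𝓝[>] 0) (𝓝 p) := by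
  have hlim (b : ℝ) : Tendsto (fun r => p + Real.log b / Real.log r) (𝓝[>] 0) (𝓝 p) := by
    simpa using tendsto_const_nhds.add (tendsto_const_nhds.div_atBot Real.tendsto_log_nhdsGT_zero)
  have hunit : Ioo (0 : ℝ) 1 ∈ 𝓝[>] (0 : ℝ) := Ioo_mem_nhdsGT one_pos
  have hlog_mul {b r : ℝ} (hb : 0 < b) (hr₀ : 0 < r) (hr₁ : r < 1) :
      Real.log (r ^ p * b) / Real.log r = p + Real.log b / Real.log r := by
    have := (Real.log_neg hr₀ hr₁).ne
    rw [Real.log_mul (Real.rpow_pos_of_pos hr₀ p).ne' hb.ne', Real.log_rpow hr₀]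
    field_simp
  refine tendsto_of_tendsto_of_tendsto_of_le_of_le' (hlim C) (hlim a) ?_ ?_
  · filter_upwards [hlow, hup, hunit] with r hlow hup ⟨hr₀, hr₁⟩
    have hrp := Real.rpow_pos_of_pos hr₀ p
    have hC : 0 < C := ha.trans_le (le_of_mul_le_mul_left (hlow.trans hup) hrp)
    rw [← hlog_mul hC hr₀ hr₁]
    exact div_le_div_of_nonpos_of_le (Real.log_neg hr₀ hr₁).le
      (Real.log_le_log ((mul_pos hrp ha).trans_le hlow) hup)
  · filter_upwards [hlow, hunit] with r hlow ⟨hr₀, hr₁⟩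
    rw [← hlog_mul ha hr₀ hr₁]
    exact div_le_div_of_nonpos_of_le (Real.log_neg hr₀ hr₁).le
      (Real.log_le_log (by positivity) hlow)

theorem stmt_15_general (n k : ℕ)
    (Γ : Set ℝ) (hΓ : ∀ d ∈ Γ, ∃ m : ℤ, d = (m : ℝ) / (Nat.factorial k))
    (hbdd : BddBelow Γ)
    (s : ℝ → ℂ) (hsupp : ∀ d ∉ Γ, s d = 0)
    (hsum : Summable fun d : Γ => ‖s d.1‖ ^ 2)
    (hne : ∃ d, s d ≠ 0) :
    ∃ dmin : ℝ, IsLeast {d | d ∈ Γ ∧ s d ≠ 0} dmin ∧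
      Tendsto
        (fun r : ℝ =>
          Real.log (∑' d : Γ, r ^ (2 * d.1 + 2 * (n : ℝ)) * ‖s d.1‖ ^ 2) /
              (2 * Real.log r) - n)
        (nhdsWithin 0 (Ioi 0)) (nhds dmin) := by
  obtain ⟨d₀, hd₀⟩ := hne
  obtain ⟨dmin, hmin⟩ := exists_isLeast_of_subset_div_int
    (S := {d | d ∈ Γ ∧ s d ≠ 0}) (Nat.cast_pos.2 k.factorial_pos)
    (fun d hd => hΓ d hd.1) (hbdd.mono fun _ hd => hd.1)
    ⟨d₀, not_imp_comm.mp (hsupp d₀) hd₀, hd₀⟩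
  refine ⟨dmin, hmin, ?_⟩
  have hw : 0 ≤ fun d : Γ => ‖s d.1‖ ^ 2 := fun _ => by positivity
  have he : ∀ d : Γ, ‖s d.1‖ ^ 2 ≠ 0 → 2 * dmin + 2 * (n : ℝ) ≤ 2 * d.1 + 2 * n :=
    fun d hd => by linarith [hmin.2 ⟨d.2, by simpa using hd⟩]
  have hunit : Ioc (0 : ℝ) 1 ∈ 𝓝[>] (0 : ℝ) := Ioc_mem_nhdsGT one_pos
  have hlog := tendsto_log_div_log_of_le_rpow (p := 2 * dmin + 2 * n)
    (f := fun r => ∑' d : Γ, r ^ (2 * d.1 + 2 * (n : ℝ)) * ‖s d.1‖ ^ 2)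
    (pow_pos (norm_pos_iff.mpr hmin.1.2) 2)
    (by
      filter_upwards [hunit] with r ⟨hr₀, hr₁⟩
      exact (summable_rpow_mul_of_le hw hsum he hr₀ hr₁).le_tsum ⟨dmin, hmin.1.1⟩
        fun _ _ => by positivity)
    (by
      filter_upwards [hunit] with r ⟨hr₀, hr₁⟩
      exact tsum_rpow_mul_le hw hsum he hr₀ hr₁)
  convert (hlog.div_const 2).sub_const (n : ℝ) using 2 <;> ring

/-- On a cone, the degree of a section equals the lowest degree appearing in its
homogeneous decomposition: for coefficients `s_d` (supported on `Γ ⊆ (1/k!)ℤ` bounded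
below, square-summable, not all zero) and `‖s‖_r² = Σ_d r^(2d+2n) |s_d|²`, the set
`{d ∈ Γ : s_d ≠ 0}` has a least element `dmin` and
`lim_{r→0⁺} log(‖s‖_r²)/(2 log r) - n = dmin`. -/
theorem stmt_15 (n k : ℕ) (hn : 1 ≤ n) (hk : 1 ≤ k)
    (Γ : Set ℝ) (hΓ : ∀ d ∈ Γ, ∃ m : ℤ, d = (m : ℝ) / (Nat.factorial k))
    (hbdd : BddBelow Γ)
    (s : ℝ → ℂ) (hsupp : ∀ d ∉ Γ, s d = 0)
    (hsum : Summable fun d : Γ => ‖s d.1‖ ^ 2)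
    (hne : ∃ d, s d ≠ 0) :
    ∃ dmin : ℝ, IsLeast {d | d ∈ Γ ∧ s d ≠ 0} dmin ∧
      Tendsto
        (fun r : ℝ =>
          Real.log (∑' d : Γ, r ^ (2 * d.1 + 2 * (n : ℝ)) * ‖s d.1‖ ^ 2) /
              (2 * Real.log r) - n)
        (nhdsWithin 0 (Ioi 0)) (nhds dmin) :=
  stmt_15_general n k Γ hΓ hbdd s hsupp hsum hne
end
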